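/- arXiv:2201.00165 — 3 statements merged into one kernel-verified Lean document; each statement's English description precedes it below -/
import Mathlib

section
/- For a simple graph G on n vertices, the permanent of its adjacency matrix equals the sum over k ≥ 0 of 2^k times the number of generalized 2-factors of G with exactly k cycles, where a generalized 2-factor is a spanning subgraph whose connected components are cycles and single edges. -/
open Finset
open scoped Classical

/-- The permanent of a square matrix with natural number entries. -/
noncomputable def permanent {n : ℕ} (A : Matrix (Fin n) (Fin n) ℕ) : ℕ :=
  ∑ σ : Equiv.Perm (Fin n), ∏ i, A i (σ i)

/-- A generalized 2-factor: a graph on `Fin n` each of whose connected components is a simple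
cycle or a single edge.  Equivalently (for finite simple graphs): every vertex has degree 1
or 2, and every neighbor of a degree-1 vertex also has degree 1. -/
noncomputable def IsGen2Factor {n : ℕ} (H : SimpleGraph (Fin n)) : Prop :=
  (∀ v, H.degree v = 1 ∨ H.degree v = 2) ∧
    ∀ v w, H.Adj v w → H.degree v = 1 → H.degree w = 1

/-- The number of cycle components of a generalized 2-factor: the number of connected
components minus the number of single-edge components (each single-edge component
contributes two vertices of degree 1). -/
noncomputable def numCycles {n : ℕ} (H : SimpleGraph (Fin n)) : ℕ :=
  Fintype.card H.ConnectedComponent -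
    (Finset.univ.filter (fun v => H.degree v = 1)).card / 2

/-- `F k G` : the number of generalized 2-factors of `G` with exactly `k` cycle components. -/
noncomputable def F {n : ℕ} (k : ℕ) (G : SimpleGraph (Fin n)) : ℕ :=
  ((Finset.univ : Finset (SimpleGraph (Fin n))).filter
    (fun H => H ≤ G ∧ IsGen2Factor H ∧ numCycles H = k)).card

/-!
The permanent counts the permutations `σ` with `σ v` adjacent to `v` for every `v`. Such a
permutation is recorded by the graph joining each `v` to `σ v`, whose components are the cycles
of `σ`: a transposition gives a single edge and a longer cycle a graph cycle, so this graph is a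
generalized 2-factor of `G`. Conversely every generalized 2-factor arises this way, since a cycle
of a graph all of whose degrees are 0 or 2 can be read off as a cyclic permutation and single
edges as transpositions. Two permutations give the same graph exactly when
`{σ v, σ⁻¹ v} = {τ v, τ⁻¹ v}` at every vertex, which forces `τ` to agree with `σ` or with `σ⁻¹`
on each component. Hence the permutations giving a generalized 2-factor with `k` cycles are
obtained from one of them by reversing it on an arbitrary set of cycle components, and there
are `2 ^ k` of them.
-/

namespace SimpleGraph

variable {V : Type*}

def ofPerm (σ : Equiv.Perm V) : SimpleGraph V :=
  SimpleGraph.fromRel fun v w => σ v = w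

lemma _root_.Equiv.Perm.self_mem_sym2_iff {σ : Equiv.Perm V} {v : V} :
    v ∈ s(σ v, σ⁻¹ v) ↔ σ v = v := by
  rw [Sym2.mem_iff, Equiv.Perm.eq_inv_iff_eq, eq_comm, or_self]

lemma _root_.Equiv.Perm.Disjoint.mul_apply_eq_iff_of_ne {σ τ : Equiv.Perm V} {v w : V}
    (h : σ.Disjoint τ) (hvw : v ≠ w) : (σ * τ) v = w ↔ σ v = w ∨ τ v = w := by
  rw [Equiv.Perm.mul_apply]
  rcases h v with hσ | hτ
  · have : σ (τ v) = τ v := by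
      rcases h (τ v) with h' | h'
      · exact h'
      · rw [τ.injective h', hσ]
    rw [this, hσ]
    exact (or_iff_right hvw).symm
  · rw [hτ]
    exact (or_iff_left (hτ ▸ hvw)).symm

section ofPerm

variable {σ τ : Equiv.Perm V} {v w a x : V}

lemma ofPerm_adj : (ofPerm σ).Adj v w ↔ v ≠ w ∧ (σ v = w ∨ σ w = v) := by
  simp [ofPerm]

lemma ofPerm_adj_iff_mem : (ofPerm σ).Adj v w ↔ v ≠ w ∧ w ∈ s(σ v, σ⁻¹ v) := by
  rw [ofPerm_adj, Sym2.mem_iff, Equiv.Perm.eq_inv_iff_eq, eq_comm (a := w)]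

lemma ofPerm_adj_apply (h : σ v ≠ v) : (ofPerm σ).Adj v (σ v) :=
  ofPerm_adj.2 ⟨h.symm, Or.inl rfl⟩

@[simp] lemma ofPerm_inv : ofPerm σ⁻¹ = ofPerm σ := by
  ext v w
  simp only [ofPerm_adj_iff_mem, inv_inv, Sym2.eq_swap]

@[simp] lemma ofPerm_one : ofPerm (1 : Equiv.Perm V) = ⊥ := by
  ext v w
  simp only [ofPerm_adj, Equiv.Perm.one_apply, bot_adj]
  grind

lemma ofPerm_mul_of_disjoint (h : σ.Disjoint τ) : ofPerm (σ * τ) = ofPerm σ ⊔ ofPerm τ := by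
  ext v w
  simp only [sup_adj, ofPerm_adj]
  by_cases hvw : v = w
  · simp [hvw]
  rw [h.mul_apply_eq_iff_of_ne hvw, h.mul_apply_eq_iff_of_ne (Ne.symm hvw)]
  tauto

lemma apply_eq_self_of_ofPerm_eq (h : ofPerm σ = ofPerm τ) (hτ : τ v = v) : σ v = v := by
  by_contra hσ
  have hmem := (ofPerm_adj_iff_mem.1 (h ▸ ofPerm_adj_apply hσ)).2
  rw [hτ, Equiv.Perm.inv_eq_iff_eq.2 hτ.symm, Sym2.mem_iff, or_self] at hmem
  exact hσ hmem

lemma ofPerm_eq_ofPerm_iff : ofPerm σ = ofPerm τ ↔ ∀ v, s(σ v, σ⁻¹ v) = s(τ v, τ⁻¹ v) := by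
  refine ⟨fun h v => Sym2.ext fun x => ?_, fun h => by ext v w; simp only [ofPerm_adj_iff_mem, h]⟩
  by_cases hx : x = v
  · subst hx
    simp only [Equiv.Perm.self_mem_sym2_iff]
    exact ⟨apply_eq_self_of_ofPerm_eq h.symm, apply_eq_self_of_ofPerm_eq h⟩
  · simpa [ofPerm_adj_iff_mem, Ne.symm hx] using congrArg (fun G => G.Adj v x) h

lemma inv_apply_eq_inv_apply_of_ofPerm_eq (h : ofPerm σ = ofPerm τ) (hv : σ v = τ v) :
    σ⁻¹ v = τ⁻¹ v :=
  Sym2.congr_right.1 (hv ▸ ofPerm_eq_ofPerm_iff.1 h v)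

lemma apply_eq_apply_of_adj (h : ofPerm σ = ofPerm τ) (hvw : (ofPerm σ).Adj v w)
    (hv : σ v = τ v) : σ w = τ w := by
  rcases Sym2.mem_iff.1 (ofPerm_adj_iff_mem.1 hvw).2 with rfl | rfl
  · have h' : ofPerm σ⁻¹ = ofPerm τ⁻¹ := by simpa using h
    simpa using inv_apply_eq_inv_apply_of_ofPerm_eq h'
      ((Equiv.Perm.inv_eq_iff_eq.2 rfl).trans (Equiv.Perm.inv_eq_iff_eq.2 hv).symm)
  · calc σ (σ⁻¹ v) = τ (τ⁻¹ v) := by simp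
      _ = τ (σ⁻¹ v) := by rw [inv_apply_eq_inv_apply_of_ofPerm_eq h hv]

lemma apply_eq_apply_of_reachable {H : SimpleGraph V} (hσ : ofPerm σ = H) (hτ : ofPerm τ = H)
    (hvw : H.Reachable v w) (hv : σ v = τ v) : σ w = τ w := by
  subst hσ
  rw [reachable_iff_reflTransGen] at hvw
  induction hvw with
  | refl => exact hv
  | tail _ hbc ih => exact apply_eq_apply_of_adj hτ.symm hbc ih

lemma eq_or_eq_apply_of_reachable_ofPerm (ha : σ (σ a) = a) (hx : (ofPerm σ).Reachable a x) :
    x = a ∨ x = σ a := by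
  have ha' : σ⁻¹ a = σ a := by rw [Equiv.Perm.inv_eq_iff_eq, ha]
  rw [reachable_iff_reflTransGen] at hx
  induction hx with
  | refl => exact Or.inl rfl
  | tail _ hbc ih =>
    have hc := Sym2.mem_iff.1 (ofPerm_adj_iff_mem.1 hbc).2
    rcases ih with rfl | rfl
    · rw [ha'] at hc
      exact Or.inr (hc.elim id id)
    · rw [ha, show σ⁻¹ (σ a) = a by simp] at hc
      exact Or.inl (hc.elim id id)

@[simp] lemma connectedComponentMk_ofPerm_apply :
    (ofPerm σ).connectedComponentMk (σ v) = (ofPerm σ).connectedComponentMk v := by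
  by_cases h : σ v = v
  · rw [h]
  · exact (ConnectedComponent.connectedComponentMk_eq_of_adj (ofPerm_adj_apply h)).symm

@[simp] lemma connectedComponentMk_ofPerm_symm_apply :
    (ofPerm σ).connectedComponentMk (σ.symm v) = (ofPerm σ).connectedComponentMk v := by
  conv_rhs => rw [← σ.apply_symm_apply v]
  rw [connectedComponentMk_ofPerm_apply]

end ofPerm

namespace Walk

variable {G : SimpleGraph V} {u : V} {p : G.Walk u u}

lemma IsCycle.formPerm_getVert (hp : p.IsCycle) {i : ℕ} (hi : i < p.length) :
    p.support.tail.formPerm (p.getVert i) = p.getVert (i + 1) := by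
  have hlen : p.support.tail.length = p.length := by simp
  have hget : ∀ k (hk : k < p.support.tail.length), p.support.tail[k] = p.getVert (k + 1) :=
    fun k hk => by simp [p.getVert_eq_support_getElem (hlen ▸ hk : k + 1 ≤ p.length)]
  have hnd := hp.support_nodup
  have h3 := hp.three_le_length
  rcases i with _ | j
  · have hlast := List.formPerm_apply_getElem _ hnd (p.length - 1) (by omega)
    rw [hget, Nat.sub_add_cancel (by omega), getVert_length] at hlast
    simp [hlast, hget, hlen, getVert_zero]
  · have := List.formPerm_apply_getElem _ hnd j (by omega)
    simp only [hget, hlen, Nat.mod_eq_of_lt hi] at this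
    exact this

lemma IsCycle.toSubgraph_adj_formPerm (hp : p.IsCycle) {x : V}
    (hx : p.support.tail.formPerm x ≠ x) : p.toSubgraph.Adj x (p.support.tail.formPerm x) := by
  obtain ⟨i, rfl, hi⟩ : ∃ i, p.getVert i = x ∧ i < p.length := by
    obtain ⟨i, rfl, hi⟩ := p.mem_support_iff_exists_getVert.1
      (List.mem_of_mem_tail (List.mem_of_formPerm_apply_ne hx))
    rcases hi.lt_or_eq with hi | rfl
    · exact ⟨i, rfl, hi⟩
    · exact ⟨0, by rw [getVert_zero, getVert_length], hp.three_le_length.trans_lt' (by omega)⟩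
  rw [hp.formPerm_getVert hi]
  exact p.toSubgraph_adj_getVert hi

lemma IsCycle.ofPerm_formPerm (hp : p.IsCycle) :
    ofPerm p.support.tail.formPerm = p.toSubgraph.spanningCoe := by
  ext x y
  rw [ofPerm_adj, Subgraph.spanningCoe_adj]
  constructor
  · rintro ⟨hxy, rfl | rfl⟩
    · exact hp.toSubgraph_adj_formPerm (Ne.symm hxy)
    · exact (hp.toSubgraph_adj_formPerm hxy).symm
  · intro h
    obtain ⟨i, hs, hi⟩ := p.toSubgraph_adj_iff.1 h
    refine ⟨h.ne, ?_⟩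
    rcases Sym2.eq_iff.1 hs with ⟨rfl, rfl⟩ | ⟨rfl, rfl⟩
    · exact Or.inl (hp.formPerm_getVert hi)
    · exact Or.inr (hp.formPerm_getVert hi)

variable [Finite V]

lemma IsCycle.notMem_support_of_sdiff_adj (hp : p.IsCycle) (hG : G.IsCycles) {x y : V}
    (h : (G \ p.toSubgraph.spanningCoe).Adj x y) : x ∉ p.support := fun hx =>
  have := Fintype.ofFinite V
  h.2 ((hp.adj_toSubgraph_iff_of_isCycles hG (p.mem_verts_toSubgraph.2 hx) y).2 h.1)

lemma IsCycle.isCycles_sdiff (hp : p.IsCycle) (hG : G.IsCycles) :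
    (G \ p.toSubgraph.spanningCoe).IsCycles := by
  rintro x ⟨y, hxy⟩
  have hx := hp.notMem_support_of_sdiff_adj hG hxy
  have : (G \ p.toSubgraph.spanningCoe).neighborSet x = G.neighborSet x := by
    ext z
    simp only [mem_neighborSet, sdiff_adj, Subgraph.spanningCoe_adj]
    exact ⟨And.left, fun h => ⟨h, fun h' => hx (p.mem_verts_toSubgraph.1 h'.fst_mem)⟩⟩
  rw [this]
  exact hG ⟨y, hxy.1⟩

end Walk

lemma IsCycles.exists_ofPerm_eq [Finite V] {G : SimpleGraph V} (hG : G.IsCycles) :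
    ∃ σ, ofPerm σ = G := by
  induction G using WellFoundedLT.induction with
  | ind G ih =>
  by_cases hbot : G = ⊥
  · exact ⟨1, hbot ▸ ofPerm_one⟩
  obtain ⟨v, w, hvw⟩ := ne_bot_iff_exists_adj.1 hbot
  obtain ⟨p, hp, -⟩ := hG.exists_cycle_toSubgraph_verts_eq_connectedComponentSupp
    (c := G.connectedComponentMk v) rfl ⟨w, hvw⟩
  have hlt : G \ p.toSubgraph.spanningCoe < G := by
    refine lt_of_le_of_ne sdiff_le fun h =>
      hp.notMem_support_of_sdiff_adj hG (y := w) ?_ p.start_mem_support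
    rwa [h]
  obtain ⟨σ, hσ⟩ := ih _ hlt (hp.isCycles_sdiff hG)
  have hdisj : p.support.tail.formPerm.Disjoint σ := by
    intro x
    by_contra! hx
    have h₁ := hp.ofPerm_formPerm ▸ ofPerm_adj_apply hx.1
    exact hp.notMem_support_of_sdiff_adj hG (hσ ▸ ofPerm_adj_apply hx.2)
      (p.mem_verts_toSubgraph.1 (p.toSubgraph.edge_vert h₁))
  refine ⟨p.support.tail.formPerm * σ, ?_⟩
  rw [ofPerm_mul_of_disjoint hdisj, hp.ofPerm_formPerm, hσ]
  exact sup_sdiff_cancel_right p.toSubgraph.spanningCoe_le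

lemma exists_ofPerm_eq_of_subsingleton {G : SimpleGraph V}
    (hG : ∀ v, (G.neighborSet v).Subsingleton) : ∃ σ, ofPerm σ = G := by
  let f : V → V := fun v => if h : ∃ w, G.Adj v w then h.choose else v
  have hf : ∀ {v w}, G.Adj v w → f v = w := fun {v w} h => by
    have hex : ∃ w, G.Adj v w := ⟨w, h⟩
    simp only [f, dif_pos hex]
    exact hG v hex.choose_spec h
  have hf_adj : ∀ {v}, f v ≠ v → G.Adj v (f v) := fun {v} h => by
    by_cases hex : ∃ w, G.Adj v w
    · obtain ⟨w, hw⟩ := hex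
      rwa [hf hw]
    · exact absurd (dif_neg hex) h
  have hinv : Function.Involutive f := fun v => by
    by_cases hv : f v = v
    · rw [hv, hv]
    · exact hf (hf_adj hv).symm
  refine ⟨hinv.toPerm f, ?_⟩
  ext v w
  simp only [ofPerm_adj, Function.Involutive.coe_toPerm]
  refine ⟨?_, fun h => ⟨h.ne, Or.inl (hf h)⟩⟩
  rintro ⟨hvw, rfl | rfl⟩
  · exact hf_adj (Ne.symm hvw)
  · exact (hf_adj hvw).symm

lemma connectedComponentMk_out {G : SimpleGraph V} (c : G.ConnectedComponent) :
    G.connectedComponentMk c.out = c :=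
  c.out_eq

section Fiber

variable {σ τ : Equiv.Perm V}

noncomputable def reverseOn (σ : Equiv.Perm V) (S : Finset (ofPerm σ).ConnectedComponent) :
    Equiv.Perm V where
  toFun v := if (ofPerm σ).connectedComponentMk v ∈ S then σ⁻¹ v else σ v
  invFun v := if (ofPerm σ).connectedComponentMk v ∈ S then σ v else σ⁻¹ v
  left_inv v := by by_cases h : (ofPerm σ).connectedComponentMk v ∈ S <;> simp [h]
  right_inv v := by by_cases h : (ofPerm σ).connectedComponentMk v ∈ S <;> simp [h]

lemma reverseOn_apply (S : Finset (ofPerm σ).ConnectedComponent) (v : V) :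
    reverseOn σ S v = if (ofPerm σ).connectedComponentMk v ∈ S then σ⁻¹ v else σ v := rfl

lemma ofPerm_reverseOn (S : Finset (ofPerm σ).ConnectedComponent) :
    ofPerm (reverseOn σ S) = ofPerm σ := by
  refine ofPerm_eq_ofPerm_iff.2 fun v => ?_
  by_cases h : (ofPerm σ).connectedComponentMk v ∈ S
  · simp [reverseOn, h, Equiv.Perm.inv_def, Sym2.eq_swap]
  · simp [reverseOn, h, Equiv.Perm.inv_def]

variable [Fintype V] [DecidableEq V]

/-- The components on which `σ` is a cycle of length at least 3. -/
noncomputable def cycleComponents (σ : Equiv.Perm V) : Finset (ofPerm σ).ConnectedComponent :=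
  {c | σ (σ c.out) ≠ c.out}

lemma inv_apply_ne_apply_of_mem_cycleComponents {c : (ofPerm σ).ConnectedComponent}
    (hc : c ∈ cycleComponents σ) : σ⁻¹ c.out ≠ σ c.out := by
  rw [Ne, eq_comm, Equiv.Perm.eq_inv_iff_eq]
  exact (mem_filter.1 hc).2

lemma reverseOn_injOn (σ : Equiv.Perm V) :
    Set.InjOn (reverseOn σ) (cycleComponents σ).powerset := by
  intro S hS T hT hST
  ext c
  have hc := congrArg (· c.out) hST
  have hK := inv_apply_ne_apply_of_mem_cycleComponents (σ := σ) (c := c)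
  simp only [reverseOn_apply, connectedComponentMk_out] at hc
  by_cases hS' : c ∈ S <;> by_cases hT' : c ∈ T <;> simp only [hS', hT', if_true, if_false] at hc ⊢
  · exact (hK (mem_powerset.1 hS hS') hc).elim
  · exact (hK (mem_powerset.1 hT hT') hc.symm).elim

lemma reverseOn_eq_of_ofPerm_eq (h : ofPerm τ = ofPerm σ) :
    reverseOn σ {c ∈ cycleComponents σ | τ c.out ≠ σ c.out} = τ := by
  ext v
  set c := (ofPerm σ).connectedComponentMk v
  have hreach : (ofPerm σ).Reachable c.out v :=
    ConnectedComponent.eq.1 (connectedComponentMk_out c)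
  refine apply_eq_apply_of_reachable (ofPerm_reverseOn _) h hreach ?_
  have hmem : τ c.out = σ c.out ∨ τ c.out = σ⁻¹ c.out :=
    Sym2.mem_iff.1 (ofPerm_eq_ofPerm_iff.1 h c.out ▸ Sym2.mem_mk_left _ _)
  rw [reverseOn_apply, connectedComponentMk_out]
  by_cases hc : c ∈ cycleComponents σ
  · have := inv_apply_ne_apply_of_mem_cycleComponents hc
    by_cases hτ : τ c.out = σ c.out <;> simp_all
  · have : σ⁻¹ c.out = σ c.out := by
      rw [eq_comm, Equiv.Perm.eq_inv_iff_eq]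
      simpa [cycleComponents] using hc
    simp_all

lemma card_filter_ofPerm_eq_ofPerm (σ : Equiv.Perm V) :
    #{τ | ofPerm τ = ofPerm σ} = 2 ^ #(cycleComponents σ) := by
  rw [← card_powerset, ← card_image_of_injOn (reverseOn_injOn σ)]
  congr 1
  ext τ
  simp only [mem_filter, mem_univ, true_and, mem_image, mem_powerset]
  constructor
  · exact fun h => ⟨_, filter_subset _ _, reverseOn_eq_of_ofPerm_eq h⟩
  · rintro ⟨S, -, rfl⟩
    exact ofPerm_reverseOn S

end Fiber

section Degree

variable [Fintype V] [DecidableEq V] {σ : Equiv.Perm V} {v : V}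

lemma neighborFinset_ofPerm (h : σ v ≠ v) : (ofPerm σ).neighborFinset v = {σ v, σ⁻¹ v} := by
  ext w
  rw [mem_neighborFinset, ofPerm_adj_iff_mem, ← Sym2.mem_toFinset, Sym2.toFinset_mk_eq]
  refine ⟨And.right, fun hw => ⟨?_, hw⟩⟩
  rintro rfl
  exact h (Equiv.Perm.self_mem_sym2_iff.1 (by rwa [← Sym2.mem_toFinset, Sym2.toFinset_mk_eq]))

lemma degree_ofPerm (h : σ v ≠ v) : (ofPerm σ).degree v = if σ (σ v) = v then 1 else 2 := by
  rw [← card_neighborFinset_eq_degree, neighborFinset_ofPerm h, card_insert_eq_ite]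
  simp only [mem_singleton, Equiv.Perm.eq_inv_iff_eq, card_singleton]

lemma card_degree_eq_one_ofPerm (hσ : ∀ v, σ v ≠ v) :
    #{v | (ofPerm σ).degree v = 1} = 2 * #(cycleComponents σ)ᶜ := by
  have hdeg : ∀ v, (ofPerm σ).degree v = 1 ↔ σ (σ v) = v := fun v => by
    rw [degree_ofPerm (hσ v)]; split_ifs <;> simp_all
  simp only [hdeg]
  have hmaps : ∀ v ∈ ({v | σ (σ v) = v} : Finset V),
      (ofPerm σ).connectedComponentMk v ∈ (cycleComponents σ)ᶜ := by
    intro v hv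
    rw [mem_filter] at hv
    simp only [cycleComponents, compl_filter, not_not, mem_filter, mem_univ, true_and]
    rcases eq_or_eq_apply_of_reachable_ofPerm hv.2
      (ConnectedComponent.eq.1 (connectedComponentMk_out _).symm) with h | h <;>
      simp [h, hv.2]
  have hfiber : ∀ c ∈ (cycleComponents σ)ᶜ,
      #{v ∈ ({v | σ (σ v) = v} : Finset V) | (ofPerm σ).connectedComponentMk v = c} = 2 := by
    intro c hc
    have ha : σ (σ c.out) = c.out := by simpa [cycleComponents] using hc
    rw [← card_pair (hσ c.out).symm]
    congr 1
    ext v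
    simp only [mem_filter, mem_univ, true_and, mem_insert, mem_singleton]
    constructor
    · rintro ⟨-, rfl⟩
      exact eq_or_eq_apply_of_reachable_ofPerm ha
        (ConnectedComponent.eq.1 (connectedComponentMk_out _))
    · rintro (rfl | rfl) <;> simp [ha, connectedComponentMk_out]
  rw [card_eq_sum_card_fiberwise hmaps, sum_const_nat hfiber, mul_comm]

end Degree

end SimpleGraph

open SimpleGraph

section Gen2Factor

variable {n : ℕ} {σ : Equiv.Perm (Fin n)} {H : SimpleGraph (Fin n)}

lemma isGen2Factor_ofPerm (hσ : ∀ v, σ v ≠ v) : IsGen2Factor (ofPerm σ) := by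
  refine ⟨fun v => ?_, fun v w hvw hv => ?_⟩
  · rw [degree_ofPerm (hσ v)]
    split_ifs <;> simp
  · rw [degree_ofPerm (hσ v), ite_eq_left_iff] at hv
    have hv : σ (σ v) = v := by by_contra h; exact absurd (hv h) (by norm_num)
    have hw : w = σ v := by
      have := (ofPerm_adj_iff_mem.1 hvw).2
      rwa [show σ⁻¹ v = σ v by rw [Equiv.Perm.inv_eq_iff_eq, hv], Sym2.mem_iff, or_self] at this
    rw [degree_ofPerm (hσ w), if_pos (by rw [hw, hv])]

lemma IsGen2Factor.apply_ne_self (h : IsGen2Factor (ofPerm σ)) (v : Fin n) : σ v ≠ v := by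
  intro hv
  obtain ⟨w, hw⟩ := ((ofPerm σ).degree_pos_iff_exists_adj v).1
    (by rcases h.1 v with h | h <;> omega)
  rw [ofPerm_adj, hv] at hw
  rcases hw with ⟨hvw, h | h⟩
  · exact hvw h
  · exact hvw (σ.injective (h.trans hv.symm)).symm

lemma forall_adj_apply_iff_isGen2Factor {G : SimpleGraph (Fin n)} :
    (∀ v, G.Adj v (σ v)) ↔ IsGen2Factor (ofPerm σ) ∧ ofPerm σ ≤ G := by
  refine ⟨fun h => ⟨isGen2Factor_ofPerm fun v => (h v).ne', fun v w hvw => ?_⟩,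
    fun ⟨hH, hle⟩ v => hle (ofPerm_adj_apply (hH.apply_ne_self v))⟩
  rcases (ofPerm_adj.1 hvw).2 with rfl | rfl
  · exact h v
  · exact (h w).symm

lemma IsGen2Factor.degree_eq_of_adj (hH : IsGen2Factor H) {v w : Fin n} (h : H.Adj v w) :
    H.degree v = H.degree w := by
  rcases hH.1 v with hv | hv
  · rw [hv, hH.2 v w h hv]
  · rcases hH.1 w with hw | hw
    · rw [hH.2 w v h.symm hw] at hv
      omega
    · rw [hv, hw]

lemma IsGen2Factor.exists_ofPerm_eq (hH : IsGen2Factor H) : ∃ σ, ofPerm σ = H := by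
  -- `H₂` is the union of the cycles of `H`, and `H \ H₂` the matching of its single edges.
  set H₂ := H ⊓ fromRel fun v _ => H.degree v = 2
  have hH₂ : H₂.IsCycles := by
    rintro v ⟨w, hw⟩
    simp only [H₂, mem_neighborSet, inf_adj, fromRel_adj] at hw
    have hv : H.degree v = 2 := hw.2.2.elim id fun h => (hH.degree_eq_of_adj hw.1).trans h
    have : H₂.neighborSet v = H.neighborSet v := by
      ext z
      simp only [H₂, mem_neighborSet, inf_adj, fromRel_adj]
      exact ⟨And.left, fun h => ⟨h, h.ne, Or.inl hv⟩⟩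
    rw [this, ← coe_neighborFinset, Set.ncard_coe_finset, card_neighborFinset_eq_degree, hv]
  have hH₁ : ∀ v, ((H \ H₂).neighborSet v).Subsingleton := by
    intro v x hx y hy
    simp only [H₂, mem_neighborSet, sdiff_adj, inf_adj, fromRel_adj, not_and, not_or] at hx hy
    have hv : H.degree v = 1 := (hH.1 v).resolve_right (hx.2 hx.1 hx.1.ne).1
    rw [← card_neighborFinset_eq_degree] at hv
    exact card_le_one.1 hv.le x ((mem_neighborFinset _ _ _).2 hx.1) y
      ((mem_neighborFinset _ _ _).2 hy.1)
  obtain ⟨σ₁, hσ₁⟩ := exists_ofPerm_eq_of_subsingleton hH₁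
  obtain ⟨σ₂, hσ₂⟩ := hH₂.exists_ofPerm_eq
  have hdisj : σ₁.Disjoint σ₂ := by
    intro v
    by_contra! h
    have h₁ : (H \ H₂).Adj v (σ₁ v) := hσ₁ ▸ ofPerm_adj_apply h.1
    have h₂ : H₂.Adj v (σ₂ v) := hσ₂ ▸ ofPerm_adj_apply h.2
    exact h₁.2 ⟨h₁.1, h₁.ne,
      h₂.2.2.elim Or.inl fun h => Or.inl ((hH.degree_eq_of_adj h₂.1).trans h)⟩
  exact ⟨σ₁ * σ₂, by rw [ofPerm_mul_of_disjoint hdisj, hσ₁, hσ₂, sdiff_sup_cancel inf_le_left]⟩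

lemma numCycles_ofPerm (hσ : ∀ v, σ v ≠ v) : numCycles (ofPerm σ) = #(cycleComponents σ) := by
  rw [numCycles, card_degree_eq_one_ofPerm hσ, Nat.mul_div_cancel_left _ two_pos, card_compl]
  have := card_le_univ (cycleComponents σ)
  omega

lemma IsGen2Factor.card_filter_ofPerm_eq (hH : IsGen2Factor H) :
    #{σ | ofPerm σ = H} = 2 ^ numCycles H := by
  obtain ⟨σ, rfl⟩ := hH.exists_ofPerm_eq
  rw [card_filter_ofPerm_eq_ofPerm, numCycles_ofPerm hH.apply_ne_self]

lemma numCycles_le (H : SimpleGraph (Fin n)) : numCycles H ≤ n :=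
  (Nat.sub_le _ _).trans <| by
    simpa using Fintype.card_le_of_surjective H.connectedComponentMk Quot.mk_surjective

lemma permanent_adjMatrix (G : SimpleGraph (Fin n)) :
    permanent (G.adjMatrix ℕ) = #{σ : Equiv.Perm (Fin n) | ∀ v, G.Adj v (σ v)} := by
  simp [permanent, adjMatrix_apply, prod_boole, sum_boole]

end Gen2Factor

/-- The permanent of the adjacency matrix of a simple graph `G` equals
`∑_{k ≥ 0} 2^k F_k(G)` where `F_k(G)` is the number of generalized 2-factors of `G`
with exactly `k` cycles (the terms with `k > n` all vanish). -/
theorem permanent_adjMatrix_eq_sum_gen2Factors {n : ℕ} (G : SimpleGraph (Fin n)) :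
    permanent (G.adjMatrix ℕ) = ∑ k ∈ Finset.range (n + 1), 2 ^ k * F k G := by
  set S : Finset (SimpleGraph (Fin n)) := {H | H ≤ G ∧ IsGen2Factor H}
  have hS : ∀ {σ : Equiv.Perm (Fin n)}, ofPerm σ ∈ S ↔ ∀ v, G.Adj v (σ v) := by
    simp [S, forall_adj_apply_iff_isGen2Factor, and_comm]
  calc permanent (G.adjMatrix ℕ) = ∑ H ∈ S, #{σ | ofPerm σ = H} := by
        rw [permanent_adjMatrix, card_eq_sum_card_fiberwise fun σ hσ => hS.2 (mem_filter.1 hσ).2]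
        refine sum_congr rfl fun H hH => ?_
        rw [filter_filter]
        exact congrArg card (filter_congr fun σ _ => and_iff_right_of_imp fun h => hS.1 (h ▸ hH))
    _ = ∑ H ∈ S, 2 ^ numCycles H :=
        sum_congr rfl fun H hH => (mem_filter.1 hH).2.2.card_filter_ofPerm_eq
    _ = ∑ k ∈ range (n + 1), 2 ^ k * F k G := by
        rw [← sum_fiberwise_of_maps_to fun H _ => mem_range.2 (Nat.lt_succ_of_le (numCycles_le H))]
        refine sum_congr rfl fun k _ => ?_
        rw [sum_congr rfl fun H hH => by rw [(mem_filter.1 hH).2], sum_const, smul_eq_mul,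
          mul_comm, F, filter_filter]
        simp only [and_assoc]
end

section
/- Let 0 < p ≤ q ≤ 1 and let G be an r-graph on n vertices with exactly q·C(n,r) edges, where p·C(n,r) is an integer. Consider the uniform distribution over all spanning subhypergraphs of G with exactly p·C(n,r) edges. Then the expected number of Hamiltonian cycles of a random such subhypergraph is at least H(G)·(p/q)^n·e^{-2/p}·(1-o(1)) as n → ∞; in particular H_r(n,p) ≥ (p/q)^n e^{-2/p} H(G)(1-o(1)). -/
open Finset

/-- The "r-set" of a permutation `π` of `ZMod n`: the set of `n` edges of the Hamiltonian
cycle of `K_n^r` corresponding to `π`. -/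
def rset (n r : ℕ) [NeZero n] (π : Equiv.Perm (ZMod n)) : Finset (Finset (ZMod n)) :=
  Finset.image (fun i : ZMod n =>
    Finset.image (fun j : Fin r => π (i + (j.val : ZMod n))) Finset.univ) Finset.univ

/-- The set of Hamiltonian cycles of the `r`-graph with edge set `G` on `ZMod n`, each
Hamiltonian cycle identified with its set of `n` edges. -/
def hamCycles (n r : ℕ) [NeZero n] (G : Finset (Finset (ZMod n))) :
    Finset (Finset (Finset (ZMod n))) :=
  Finset.image (rset n r)
    (Finset.univ.filter (fun π : Equiv.Perm (ZMod n) => rset n r π ⊆ G))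

/-- `Hmax n r m` : the maximum number of Hamiltonian cycles over all `r`-graphs on `n`
vertices with exactly `m` edges. -/
def Hmax (n r m : ℕ) [NeZero n] : ℕ :=
  Finset.sup (((Finset.univ : Finset (ZMod n)).powersetCard r).powersetCard m)
    (fun G => (hamCycles n r G).card)

/-!
Every Hamiltonian cycle of `G` has at most `n` edges, so it survives in at least
`C(E - n, m - n)` of the `C(E, m)` subgraphs of `G` with `m` edges, where `E = |G|`.
Double counting pairs (cycle, subgraph) bounds the average from below by
`H(G) · C(E - n, m - n) / C(E, m) ≥ H(G) · ((m - n) / E) ^ n`, and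
`((m - n) / E) ^ n = (p / q) ^ n (1 - n / m) ^ n ≥ (p / q) ^ n e^{-n² / (m - n)}`.
Since `m ≥ p · C(n, 2)`, the exponent `n² / (m - n)` tends to `2 / p`.
-/

namespace Nat

theorem choose_le_choose_of_le_half_left {n a b : ℕ} (hab : a ≤ b) (hb : b ≤ n / 2) :
    n.choose a ≤ n.choose b := by
  induction b, hab using Nat.le_induction with
  | base => rfl
  | succ b _ ih => exact (ih (by omega)).trans (choose_le_succ_of_lt_half_left (by omega))

theorem antitone_choose_sub_sub {E m : ℕ} (hmE : m ≤ E) :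
    Antitone fun k => (E - k).choose (m - k) := by
  refine antitone_nat_of_succ_le fun k => ?_
  show (E - (k + 1)).choose (m - (k + 1)) ≤ (E - k).choose (m - k)
  rcases lt_or_ge k m with hkm | hmk
  · obtain ⟨a, ha⟩ : ∃ a, E - k = a + 1 := ⟨E - k - 1, by omega⟩
    obtain ⟨b, hb⟩ : ∃ b, m - k = b + 1 := ⟨m - k - 1, by omega⟩
    rw [ha, hb, show E - (k + 1) = a by omega, show m - (k + 1) = b by omega, choose_succ_succ]
    exact le_self_add
  · rw [show m - k = 0 by omega, show m - (k + 1) = 0 by omega, choose_zero_right,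
      choose_zero_right]

theorem choose_mul_sub_pow_le {E m n : ℕ} (hnm : n ≤ m) :
    E.choose m * (m - n) ^ n ≤ (E - n).choose (m - n) * E ^ n := by
  have hdesc : E.choose m * m.descFactorial n = (E - n).choose (m - n) * E.descFactorial n := by
    rw [descFactorial_eq_factorial_mul_choose, descFactorial_eq_factorial_mul_choose,
      mul_left_comm, choose_mul hnm]
    ring
  calc E.choose m * (m - n) ^ n
      ≤ E.choose m * m.descFactorial n :=
        Nat.mul_le_mul_left _
          ((Nat.pow_le_pow_left (by omega) n).trans (pow_sub_le_descFactorial m n))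
    _ = (E - n).choose (m - n) * E.descFactorial n := hdesc
    _ ≤ (E - n).choose (m - n) * E ^ n := Nat.mul_le_mul_left _ (descFactorial_le_pow E n)

end Nat

namespace Finset

variable {α : Type*} [DecidableEq α]

theorem card_mul_choose_le_sum_card_filter_subset {G : Finset α} {𝓗 : Finset (Finset α)}
    {k m : ℕ} (h𝓗 : ∀ H ∈ 𝓗, H ⊆ G ∧ #H ≤ k) (hkm : k ≤ m) (hmG : m ≤ #G) :
    #𝓗 * (#G - k).choose (m - k) ≤ ∑ S ∈ G.powersetCard m, #{H ∈ 𝓗 | H ⊆ S} := by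
  calc #𝓗 * (#G - k).choose (m - k)
      ≤ ∑ H ∈ 𝓗, #{S ∈ G.powersetCard m | H ⊆ S} := by
        rw [← smul_eq_mul]
        refine card_nsmul_le_sum _ _ _ fun H hH => ?_
        obtain ⟨hHG, hHk⟩ := h𝓗 H hH
        rw [card_filter_powersetCard_subset H G m hHG (hHk.trans hkm)]
        exact Nat.antitone_choose_sub_sub hmG hHk
    _ = ∑ S ∈ G.powersetCard m, #{H ∈ 𝓗 | H ⊆ S} :=
        sum_card_bipartiteAbove_eq_sum_card_bipartiteBelow fun H S : Finset α => H ⊆ S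

end Finset

namespace Real

theorem exp_neg_div_one_sub_le {x : ℝ} (hx : x < 1) : exp (-(x / (1 - x))) ≤ 1 - x := by
  have hpos : 0 < 1 - x := by linarith
  have hlog : -(x / (1 - x)) ≤ log (1 - x) := by
    refine le_of_eq_of_le ?_ (one_sub_inv_le_log_of_pos hpos)
    field_simp
    ring
  calc exp (-(x / (1 - x))) ≤ exp (log (1 - x)) := exp_le_exp.mpr hlog
    _ = 1 - x := exp_log hpos

theorem exp_neg_sq_div_le_one_sub_div_pow {n : ℕ} {m : ℝ} (hnm : n < m) :
    exp (-((n : ℝ) ^ 2 / (m - n))) ≤ (1 - n / m) ^ n := by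
  have hm : 0 < m := (Nat.cast_nonneg n).trans_lt hnm
  have hx : (n : ℝ) / m < 1 := (div_lt_one hm).mpr hnm
  have hsq : (n : ℝ) ^ 2 / (m - n) = n * ((n / m) / (1 - n / m)) := by
    have : m - n ≠ 0 := by linarith
    field_simp
  rw [hsq, neg_mul_eq_mul_neg, exp_nat_mul]
  exact pow_le_pow_left₀ (exp_nonneg _) (exp_neg_div_one_sub_le hx) n

end Real

open Filter in
theorem eventually_lt_and_sq_div_sub_le {p A : ℝ} (hp : 0 < p) (hA : 2 / p < A) :
    ∀ᶠ n : ℕ in atTop, ∀ m : ℝ, p * n.choose 2 ≤ m →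
      (n : ℝ) < m ∧ (n : ℝ) ^ 2 / (m - n) ≤ A := by
  set c := A * p / 2
  have hc : 1 < c := by
    rw [div_lt_iff₀ hp] at hA
    simp only [c]
    linarith
  have hApos : 0 < A := (div_pos two_pos hp).trans hA
  filter_upwards [eventually_ge_atTop ⌈(A + c) / (c - 1)⌉₊, eventually_gt_atTop 0]
    with n hnc hn m hm
  rw [Nat.cast_choose_two] at hm
  have hn : (0 : ℝ) < n := by exact_mod_cast hn
  -- the threshold is where `n + A ≤ c (n - 1)`; multiplied by `n` this gives `n² + A n ≤ A m`
  replace hnc : A + c ≤ (c - 1) * n := by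
    rw [← div_le_iff₀' (by linarith)]
    exact (Nat.le_ceil _).trans (by exact_mod_cast hnc)
  have hsq : (n : ℝ) ^ 2 ≤ A * (m - n) :=
    calc (n : ℝ) ^ 2 ≤ c * n * (n - 1) - A * n := by
          nlinarith [mul_le_mul_of_nonneg_left hnc hn.le]
      _ = A * (p * (n * (n - 1) / 2)) - A * n := by ring
      _ ≤ A * (m - n) := by nlinarith [mul_le_mul_of_nonneg_left hm hApos.le]
  have hnm : (n : ℝ) < m :=
    sub_pos.mp (pos_of_mul_pos_right ((pow_pos hn 2).trans_le hsq) hApos.le)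
  exact ⟨hnm, div_le_of_le_mul₀ (sub_nonneg.mpr hnm.le) hApos.le hsq⟩

section HamiltonianCycles

variable {n r : ℕ} [NeZero n]

theorem subset_and_card_le_of_mem_hamCycles {G H : Finset (Finset (ZMod n))}
    (hH : H ∈ hamCycles n r G) : H ⊆ G ∧ H.card ≤ n := by
  obtain ⟨π, hπ, rfl⟩ := mem_image.mp hH
  refine ⟨(mem_filter.mp hπ).2, ?_⟩
  calc (rset n r π).card ≤ (univ : Finset (ZMod n)).card := card_image_le
    _ = n := by rw [card_univ, ZMod.card]

theorem mem_hamCycles_of_subset {G S H : Finset (Finset (ZMod n))}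
    (hH : H ∈ hamCycles n r G) (hHS : H ⊆ S) : H ∈ hamCycles n r S := by
  obtain ⟨π, -, rfl⟩ := mem_image.mp hH
  exact mem_image.mpr ⟨π, mem_filter.mpr ⟨mem_univ π, hHS⟩, rfl⟩

theorem card_hamCycles_mul_choose_le_sum {G : Finset (Finset (ZMod n))} {m : ℕ}
    (hnm : n ≤ m) (hmG : m ≤ G.card) :
    (hamCycles n r G).card * (G.card - n).choose (m - n) ≤
      ∑ S ∈ G.powersetCard m, (hamCycles n r S).card := by
  refine (card_mul_choose_le_sum_card_filter_subset
    (fun H hH => subset_and_card_le_of_mem_hamCycles hH) hnm hmG).trans (sum_le_sum fun S _ => ?_)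
  exact card_le_card fun H hH => mem_hamCycles_of_subset (mem_filter.mp hH).1 (mem_filter.mp hH).2

theorem card_hamCycles_mul_pow_le_average {G : Finset (Finset (ZMod n))} {m : ℕ}
    (hnm : n ≤ m) (hmG : m ≤ G.card) :
    ((hamCycles n r G).card : ℝ) * (((m : ℝ) - n) / G.card) ^ n ≤
      (∑ S ∈ G.powersetCard m, ((hamCycles n r S).card : ℝ)) / G.card.choose m := by
  have hchoose : (0 : ℝ) < G.card.choose m := by exact_mod_cast Nat.choose_pos hmG
  have hratio : (G.card.choose m : ℝ) * ((m : ℝ) - n) ^ n ≤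
      ((G.card - n).choose (m - n) : ℕ) * (G.card : ℝ) ^ n := by
    rw [← Nat.cast_sub hnm]
    exact_mod_cast Nat.choose_mul_sub_pow_le hnm
  have hsum : ((hamCycles n r G).card : ℝ) * ((G.card - n).choose (m - n) : ℕ) ≤
      ∑ S ∈ G.powersetCard m, ((hamCycles n r S).card : ℝ) := by
    exact_mod_cast card_hamCycles_mul_choose_le_sum hnm hmG
  rw [le_div_iff₀ hchoose]
  calc ((hamCycles n r G).card : ℝ) * (((m : ℝ) - n) / G.card) ^ n * G.card.choose m
      = (hamCycles n r G).card * (G.card.choose m * ((m : ℝ) - n) ^ n / (G.card : ℝ) ^ n) := by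
        rw [div_pow]
        ring
    _ ≤ (hamCycles n r G).card * ((G.card - n).choose (m - n) : ℕ) := by
        gcongr
        exact div_le_of_le_mul₀ (by positivity) (by positivity) hratio
    _ ≤ _ := hsum

theorem card_hamCycles_mul_exp_le_average {G : Finset (Finset (ZMod n))} {m : ℕ}
    (hnm : (n : ℝ) < m) (hmG : m ≤ G.card) :
    ((hamCycles n r G).card : ℝ) * ((m : ℝ) / G.card) ^ n *
        Real.exp (-((n : ℝ) ^ 2 / (m - n))) ≤
      (∑ S ∈ G.powersetCard m, ((hamCycles n r S).card : ℝ)) / G.card.choose m := by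
  have hm : (m : ℝ) ≠ 0 := ((Nat.cast_nonneg n).trans_lt hnm).ne'
  calc _ ≤ (hamCycles n r G).card * ((m : ℝ) / G.card) ^ n * (1 - n / m) ^ n := by
        gcongr
        exact Real.exp_neg_sq_div_le_one_sub_div_pow hnm
    _ = (hamCycles n r G).card * (((m : ℝ) - n) / G.card) ^ n := by
        rw [mul_assoc, ← mul_pow]
        congr 2
        field_simp
    _ ≤ _ := card_hamCycles_mul_pow_le_average (by exact_mod_cast hnm.le) hmG

theorem average_card_hamCycles_le_Hmax {G : Finset (Finset (ZMod n))}
    (hG : G ⊆ (univ : Finset (ZMod n)).powersetCard r) (m : ℕ) :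
    (∑ S ∈ G.powersetCard m, ((hamCycles n r S).card : ℝ)) / G.card.choose m ≤
      Hmax n r m := by
  refine div_le_of_le_mul₀ (by positivity) (by positivity) ?_
  have hle : ∀ S ∈ G.powersetCard m, ((hamCycles n r S).card : ℝ) ≤ Hmax n r m := by
    intro S hS
    obtain ⟨hSG, hSm⟩ := mem_powersetCard.mp hS
    exact_mod_cast le_sup (f := fun S => (hamCycles n r S).card)
      (mem_powersetCard.mpr ⟨hSG.trans hG, hSm⟩)
  simpa [mul_comm] using sum_le_card_nsmul _ _ _ hle

end HamiltonianCycles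

theorem expected_ham_of_random_subhypergraph_general (r : ℕ) (hr : 2 ≤ r) (p q : ℝ)
    (hp : 0 < p) (hpq : p ≤ q) :
    ∀ ε : ℝ, 0 < ε → ∃ N : ℕ, ∀ (n : ℕ) [NeZero n], N ≤ n →
      ∀ m : ℕ, (m : ℝ) = p * (n.choose r) →
      ∀ G ∈ ((Finset.univ : Finset (ZMod n)).powersetCard r).powerset,
        (G.card : ℝ) = q * (n.choose r) →
        ((∑ S ∈ G.powersetCard m, ((hamCycles n r S).card : ℝ)) / (G.card.choose m) ≥
            ((hamCycles n r G).card : ℝ) * (p / q) ^ n * Real.exp (-2 / p) * (1 - ε)) ∧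
        ((Hmax n r m : ℝ) ≥
            ((hamCycles n r G).card : ℝ) * (p / q) ^ n * Real.exp (-2 / p) * (1 - ε)) := by
  intro ε hε
  obtain ⟨N, hN⟩ := Filter.eventually_atTop.mp
    ((eventually_lt_and_sq_div_sub_le hp (lt_add_of_pos_right (2 / p) hε)).and
      (Filter.eventually_ge_atTop (2 * r)))
  refine ⟨N, fun n _ hn m hm G hG hGcard => ?_⟩
  obtain ⟨hsq, hrn⟩ := hN n hn
  have hq : 0 < q := hp.trans_le hpq
  have hC : 0 < (n.choose r : ℝ) := by exact_mod_cast Nat.choose_pos (by omega)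
  obtain ⟨hnm, hexp⟩ := hsq m <| by
    rw [hm]
    gcongr
    exact Nat.choose_le_choose_of_le_half_left hr (by omega)
  have hmG : m ≤ G.card := by exact_mod_cast (hm.trans_le (by gcongr)).trans hGcard.ge
  have hdensity : p / q = m / G.card := by
    rw [hm, hGcard]
    field_simp
  have lower : ((hamCycles n r G).card : ℝ) * (p / q) ^ n * Real.exp (-2 / p) * (1 - ε) ≤
      (∑ S ∈ G.powersetCard m, ((hamCycles n r S).card : ℝ)) / G.card.choose m :=
    calc ((hamCycles n r G).card : ℝ) * (p / q) ^ n * Real.exp (-2 / p) * (1 - ε)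
        ≤ (hamCycles n r G).card * (p / q) ^ n * Real.exp (-(2 / p + ε)) := by
          rw [mul_assoc, neg_add, Real.exp_add, neg_div]
          gcongr
          exact Real.one_sub_le_exp_neg ε
      _ ≤ (hamCycles n r G).card * (m / G.card) ^ n * Real.exp (-((n : ℝ) ^ 2 / (m - n))) := by
          rw [hdensity]
          gcongr
      _ ≤ _ := card_hamCycles_mul_exp_le_average hnm hmG
  exact ⟨lower, lower.trans (average_card_hamCycles_le_Hmax (mem_powerset.mp hG) m)⟩

/-- Let `0 < p ≤ q ≤ 1` and let `G` be an `r`-graph on `n` vertices with exactly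
`q·C(n,r)` edges, where `m = p·C(n,r)` is an integer.  The average number of Hamiltonian
cycles over all spanning subhypergraphs of `G` with exactly `m` edges is at least
`H(G)·(p/q)^n·e^{-2/p}·(1-o(1))` as `n → ∞`; in particular
`H_r(n,p) ≥ (p/q)^n e^{-2/p} H(G)(1-o(1))`. -/
theorem expected_ham_of_random_subhypergraph (r : ℕ) (hr : 2 ≤ r) (p q : ℝ)
    (hp : 0 < p) (hpq : p ≤ q) (hq : q ≤ 1) :
    ∀ ε : ℝ, 0 < ε → ∃ N : ℕ, ∀ (n : ℕ) [NeZero n], N ≤ n →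
      ∀ m : ℕ, (m : ℝ) = p * (n.choose r) →
      ∀ G ∈ ((Finset.univ : Finset (ZMod n)).powersetCard r).powerset,
        (G.card : ℝ) = q * (n.choose r) →
        ((∑ S ∈ G.powersetCard m, ((hamCycles n r S).card : ℝ)) / (G.card.choose m) ≥
            ((hamCycles n r G).card : ℝ) * (p / q) ^ n * Real.exp (-2 / p) * (1 - ε)) ∧
        ((Hmax n r m : ℝ) ≥
            ((hamCycles n r G).card : ℝ) * (p / q) ^ n * Real.exp (-2 / p) * (1 - ε)) :=
  expected_ham_of_random_subhypergraph_general r hr p q hp hpq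
end

section
/- Let L be an (n, r, k, β, δ)-packing of K_n^r with β ≤ 1/2 - δ. Then for all sufficiently large n, L can be partitioned into |L|/k parts of size k each such that any two r-graphs in the same part are vertex-disjoint. -/
/-!
Call two members of `L` in conflict when they share a vertex. Since the members are
edge-disjoint and each has at least `n^{-δ} C(q-1, r-1)` edges through any of its vertices, a
vertex lies in at most `C(n-1, r-1) n^δ / C(q-1, r-1)` members, so a member is in conflict with
at most `D = O(n^{r - rβ - (1 - 2β - δ)})` others; as `β ≤ 1/2 - δ`, this is `o(|L|)`.

The partition is then a weak form of Hajnal–Szemerédi, which holds as soon as there are more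
than `kD + 1` parts: among all partitions of `L` into `k`-sets take one with the fewest
conflicts inside parts. If a part `t` contains a conflict `x ~ y`, the neighbours of `t` meet at
most `kD` parts, so some other part `u` has no conflict with `t`; exchanging `x` with any
`w ∈ u` removes the conflict `x ~ y` without creating new ones.
-/

open Finset

/-- An element of a packing: an `r`-subgraph of `K_n^r`, given by its vertex set and its
edge set. -/
abbrev Subgraph (n : ℕ) := Finset (Fin n) × Finset (Finset (Fin n))

/-- An `(n, r, k, β, δ)`-packing of `K_n^r`: a set `L` of pairwise edge-disjoint
`r`-subgraphs of `K_n^r` such that (i) every element has `q = ⌈n^β⌉` vertices; (ii) every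
vertex set `X` with `1 ≤ |X| ≤ r-1` inside an element `B` has degree at least
`n^{-δ}·C(q-|X|, r-|X|)` in `B`; (iii) at most half the edges of `K_n^r` lie in elements
of `L`; (iv) `|L| ≥ n^{r-rβ}` and `k ∣ |L|`; (v) all elements have the same number of
edges. -/
def IsPacking (n r k : ℕ) (β δ : ℝ) (L : Finset (Subgraph n)) : Prop :=
  (∀ B ∈ L, B.1.card = ⌈(n : ℝ) ^ β⌉₊ ∧ ∀ e ∈ B.2, e ⊆ B.1 ∧ e.card = r) ∧
  (∀ B ∈ L, ∀ B' ∈ L, B ≠ B' → Disjoint B.2 B'.2) ∧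
  (∀ B ∈ L, ∀ X ⊆ B.1, 1 ≤ X.card → X.card ≤ r - 1 →
    (n : ℝ) ^ (-δ) * ((⌈(n : ℝ) ^ β⌉₊ - X.card).choose (r - X.card) : ℝ) ≤
      ((B.2.filter (fun e => X ⊆ e)).card : ℝ)) ∧
  (2 * ∑ B ∈ L, B.2.card ≤ n.choose r) ∧
  ((n : ℝ) ^ ((r : ℝ) - r * β) ≤ (L.card : ℝ) ∧ k ∣ L.card) ∧
  (∀ B ∈ L, ∀ B' ∈ L, B.2.card = B'.2.card)

namespace Finpartition

variable {α : Type*} [DecidableEq α] {s : Finset α} {k : ℕ}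

lemma exists_forall_card_eq_of_dvd (hs : k ∣ #s) :
    ∃ P : Finpartition s, ∀ t ∈ P.parts, #t = k := by
  obtain ⟨a, ha⟩ := hs
  have h : a * k + 0 * (k + 1) = #s := by rw [ha]; ring
  refine ⟨(⊥ : Finpartition s).equitabilise h, fun t ht => ?_⟩
  refine (card_eq_of_mem_parts_equitabilise ht).resolve_right fun htk => ?_
  have hbig := card_filter_equitabilise_big (⊥ : Finpartition s) h
  rw [card_eq_zero, filter_eq_empty_iff] at hbig
  exact hbig ht htk

lemma card_parts_mul_eq (P : Finpartition s) (hP : ∀ t ∈ P.parts, #t = k) :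
    #P.parts * k = #s := by
  rw [← P.sum_card_parts, sum_const_nat hP]

def permute (P : Finpartition s) (σ : Equiv.Perm α) (hσ : s.map (σ : α ↪ α) = s) :
    Finpartition s :=
  (P.map (σ.finsetCongr.toOrderIso (fun _ _ h => map_subset_map.2 h)
    (fun _ _ h => map_subset_map.2 h))).copy hσ

lemma parts_permute (P : Finpartition s) (σ : Equiv.Perm α) (hσ : s.map (σ : α ↪ α) = s) :
    (P.permute σ hσ).parts = P.parts.map σ.finsetCongr.toEmbedding := rfl

variable {G : SimpleGraph α} {P : Finpartition s}

lemma adj_of_adj_swap {t u r : Finset α} (ht : t ∈ P.parts) (hu : u ∈ P.parts)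
    (hr : r ∈ P.parts) (htu : t ≠ u) (hclean : ∀ x ∈ t, ∀ y ∈ u, ¬G.Adj x y)
    {x w a b : α} (hx : x ∈ t) (hw : w ∈ u) (ha : a ∈ r) (hb : b ∈ r)
    (hab : G.Adj (Equiv.swap x w a) (Equiv.swap x w b)) : G.Adj a b := by
  have hxu : x ∉ u := fun h => htu (P.eq_of_mem_parts ht hu hx h)
  have hwt : w ∉ t := fun h => htu (P.eq_of_mem_parts ht hu h hw)
  have hrt : x ∈ r → r = t := fun h => P.eq_of_mem_parts hr ht h hx
  have hru : w ∈ r → r = u := fun h => P.eq_of_mem_parts hr hu h hw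
  rcases eq_or_ne a x with rfl | hax
  · obtain rfl := hrt ha
    rcases eq_or_ne b a with rfl | hba
    · exact absurd rfl hab.ne
    · rw [Equiv.swap_apply_left,
        Equiv.swap_apply_of_ne_of_ne hba (ne_of_mem_of_not_mem hb hwt)] at hab
      exact absurd hab.symm (hclean b hb w hw)
  rcases eq_or_ne a w with rfl | haw
  · obtain rfl := hru ha
    rcases eq_or_ne b a with rfl | hba
    · exact absurd rfl hab.ne
    · rw [Equiv.swap_apply_right,
        Equiv.swap_apply_of_ne_of_ne (ne_of_mem_of_not_mem hb hxu) hba] at hab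
      exact absurd hab (hclean x hx b hb)
  rw [Equiv.swap_apply_of_ne_of_ne hax haw] at hab
  rcases eq_or_ne b x with rfl | hbx
  · obtain rfl := hrt hb
    exact absurd (Equiv.swap_apply_left b w ▸ hab) (hclean a ha w hw)
  rcases eq_or_ne b w with rfl | hbw
  · obtain rfl := hru hb
    exact absurd (Equiv.swap_apply_right x b ▸ hab).symm (hclean x hx a ha)
  rwa [Equiv.swap_apply_of_ne_of_ne hbx hbw] at hab

variable [DecidableRel G.Adj]

variable (G) in
def numAdjWithin (P : Finpartition s) : ℕ :=
  ∑ t ∈ P.parts, ∑ a ∈ t, #{b ∈ t | G.Adj a b}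

variable (G) in
lemma numAdjWithin_permute (P : Finpartition s) (σ : Equiv.Perm α)
    (hσ : s.map (σ : α ↪ α) = s) :
    (P.permute σ hσ).numAdjWithin G =
      ∑ t ∈ P.parts, ∑ a ∈ t, #{b ∈ t | G.Adj (σ a) (σ b)} := by
  simp [numAdjWithin, parts_permute, sum_map, filter_map, card_map]

lemma exists_part_forall_not_adj {D : ℕ} (hdeg : ∀ a ∈ s, #{b ∈ s | G.Adj a b} ≤ D)
    {t : Finset α} (ht : t ∈ P.parts) (hP : #t * D + 1 < #P.parts) :
    ∃ u ∈ P.parts, u ≠ t ∧ ∀ x ∈ t, ∀ y ∈ u, ¬G.Adj x y := by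
  set N := t.biUnion fun x => {b ∈ s | G.Adj x b}
  have hN : #N ≤ #t * D := card_biUnion_le_card_mul _ _ _ fun x hx => hdeg x (P.subset ht hx)
  have hcard : #(insert t (N.image P.part)) < #P.parts :=
    (card_insert_le _ _).trans_lt (by have := card_image_le (s := N) (f := P.part); omega)
  obtain ⟨u, hu, hnot⟩ := exists_mem_notMem_of_card_lt_card hcard
  refine ⟨u, hu, fun h => hnot (h ▸ mem_insert_self _ _), fun x hx y hy hxy => hnot ?_⟩
  exact mem_insert_of_mem (mem_image.2 ⟨y,
    mem_biUnion.2 ⟨x, hx, mem_filter.2 ⟨P.subset hu hy, hxy⟩⟩, P.part_eq_of_mem hu hy⟩)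

lemma numAdjWithin_swap_lt {t u : Finset α} (ht : t ∈ P.parts) (hu : u ∈ P.parts)
    (htu : t ≠ u) (hclean : ∀ x ∈ t, ∀ y ∈ u, ¬G.Adj x y) {x y w : α} (hx : x ∈ t)
    (hy : y ∈ t) (hxy : G.Adj x y) (hw : w ∈ u) (hσ : s.map (Equiv.swap x w : α ↪ α) = s) :
    (P.permute (Equiv.swap x w) hσ).numAdjWithin G < P.numAdjWithin G := by
  rw [numAdjWithin_permute]
  have hle : ∀ r ∈ P.parts, ∀ a ∈ r,
      {b ∈ r | G.Adj (Equiv.swap x w a) (Equiv.swap x w b)} ⊆ {b ∈ r | G.Adj a b} :=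
    fun r hr a ha => monotone_filter_right _ fun b hb h =>
      adj_of_adj_swap ht hu hr htu hclean hx hw ha hb h
  refine sum_lt_sum (fun r hr => sum_le_sum fun a ha => card_le_card (hle r hr a ha))
    ⟨t, ht, sum_lt_sum (fun a ha => card_le_card (hle t ht a ha)) ⟨x, hx, card_lt_card ?_⟩⟩
  refine (ssubset_iff_of_subset (hle t ht x hx)).2 ⟨y, mem_filter.2 ⟨hy, hxy⟩, fun h => ?_⟩
  have hwt : w ∉ t := fun h => htu (P.eq_of_mem_parts ht hu h hw)
  rw [mem_filter, Equiv.swap_apply_left, Equiv.swap_apply_of_ne_of_ne hxy.ne.symm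
    (ne_of_mem_of_not_mem hy hwt)] at h
  exact hclean y hy w hw h.2.symm

end Finpartition

open Finpartition in
theorem SimpleGraph.exists_finpartition_card_eq_isIndepSet {α : Type*} [DecidableEq α]
    (G : SimpleGraph α) [DecidableRel G.Adj] (s : Finset α) (k D : ℕ)
    (hdeg : ∀ a ∈ s, #{b ∈ s | G.Adj a b} ≤ D) (hdvd : k ∣ #s)
    (hs : k * (k * D + 1) < #s) :
    ∃ P : Finpartition s, ∀ t ∈ P.parts, #t = k ∧ G.IsIndepSet t := by
  obtain ⟨P, hP, hmin⟩ := exists_min_image {P : Finpartition s | ∀ t ∈ P.parts, #t = k}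
    (numAdjWithin G)
    ⟨_, mem_filter.2 ⟨mem_univ _, (exists_forall_card_eq_of_dvd hdvd).choose_spec⟩⟩
  replace hP : ∀ t ∈ P.parts, #t = k := (mem_filter.1 hP).2
  refine ⟨P, fun t ht => ⟨hP t ht, fun x hx y hy _ hxy => ?_⟩⟩
  have hparts : #t * D + 1 < #P.parts := by
    rw [hP t ht]
    refine Nat.lt_of_mul_lt_mul_left (a := k) ?_
    rw [mul_comm k #P.parts, card_parts_mul_eq P hP]
    exact hs
  obtain ⟨u, hu, hut, hclean⟩ := exists_part_forall_not_adj hdeg ht hparts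
  obtain ⟨w, hw⟩ := P.nonempty_of_mem_parts hu
  have hσ : s.map (Equiv.swap x w : α ↪ α) = s := map_perm fun a ha => by
    obtain ⟨-, rfl | rfl⟩ := Equiv.swap_apply_ne_self_iff.1 ha
    exacts [P.subset ht hx, P.subset hu hw]
  refine (hmin (P.permute _ hσ) (mem_filter.2 ⟨mem_univ _, ?_⟩)).not_gt
    (numAdjWithin_swap_lt ht hu hut.symm hclean hx hy hxy hw hσ)
  rw [parts_permute, forall_mem_map]
  exact fun r hr => (card_map _).trans (hP r hr)

def overlapGraph {ι β : Type*} (f : ι → Finset β) : SimpleGraph ι where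
  Adj i j := i ≠ j ∧ ¬Disjoint (f i) (f j)
  symm := ⟨fun _ _ h => ⟨h.1.symm, fun hd => h.2 hd.symm⟩⟩
  loopless := ⟨fun _ h => h.1 rfl⟩

instance {ι β : Type*} [DecidableEq ι] [DecidableEq β] (f : ι → Finset β) :
    DecidableRel (overlapGraph f).Adj :=
  fun i j => inferInstanceAs (Decidable (i ≠ j ∧ ¬Disjoint (f i) (f j)))

lemma card_filter_overlapGraph_adj_le {ι β : Type*} [DecidableEq ι] [DecidableEq β]
    (f : ι → Finset β) (L : Finset ι) (i : ι) :
    #{j ∈ L | (overlapGraph f).Adj i j} ≤ ∑ v ∈ f i, #{j ∈ L | v ∈ f j} := by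
  refine (card_le_card fun j hj => ?_).trans card_biUnion_le
  obtain ⟨hjL, -, hij⟩ := mem_filter.1 hj
  obtain ⟨v, hvi, hvj⟩ := not_disjoint_iff.1 hij
  exact mem_biUnion.2 ⟨v, hvi, mem_filter.2 ⟨hjL, hvj⟩⟩

lemma card_le_choose_of_forall_mem {α : Type*} [Fintype α] [DecidableEq α]
    {E : Finset (Finset α)} {v : α} {r : ℕ} (hE : ∀ e ∈ E, v ∈ e ∧ #e = r) :
    #E ≤ (Fintype.card α - 1).choose (r - 1) := by
  have hmaps : Set.MapsTo (fun e : Finset α => e.erase v) E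
      (powersetCard (r - 1) (univ.erase v)) := fun e he => by
    obtain ⟨hve, her⟩ := hE e he
    simpa [card_erase_of_mem hve, her] using erase_subset_erase v (subset_univ e)
  have hinj : Set.InjOn (fun e : Finset α => e.erase v) E := fun e he e' he' h => by
    rw [← insert_erase (hE e he).1, ← insert_erase (hE e' he').1]
    exact congrArg (insert v) h
  simpa [card_erase_of_mem] using card_le_card_of_injOn _ hmaps hinj

lemma card_filter_mem_mul_le {n r : ℕ} {L : Finset (Subgraph n)} (hedge : ∀ B ∈ L, ∀ e ∈ B.2, #e = r)
    (hdisj : ∀ B ∈ L, ∀ B' ∈ L, B ≠ B' → Disjoint B.2 B'.2) (v : Fin n) {m : ℝ}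
    (hm : ∀ B ∈ L, v ∈ B.1 → m ≤ #{e ∈ B.2 | v ∈ e}) :
    #{B ∈ L | v ∈ B.1} * m ≤ (n - 1).choose (r - 1) := by
  set T := {B ∈ L | v ∈ B.1}
  have hT : ∀ B ∈ T, B ∈ L ∧ v ∈ B.1 := fun B hB => mem_filter.1 hB
  have hcover : #(T.biUnion fun B => {e ∈ B.2 | v ∈ e}) ≤ (n - 1).choose (r - 1) := by
    simpa using card_le_choose_of_forall_mem (v := v) (r := r) fun e he => by
      obtain ⟨B, hB, he⟩ := mem_biUnion.1 he
      exact ⟨(mem_filter.1 he).2, hedge B (hT B hB).1 e (mem_filter.1 he).1⟩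
  rw [card_biUnion fun B hB B' hB' h => disjoint_filter_filter
    (hdisj B (hT B hB).1 B' (hT B' hB').1 h)] at hcover
  calc #T * m ≤ ∑ B ∈ T, (#{e ∈ B.2 | v ∈ e} : ℝ) := by
        simpa using card_nsmul_le_sum T _ m fun B hB => hm B (hT B hB).1 (hT B hB).2
    _ ≤ (n - 1).choose (r - 1) := by exact_mod_cast hcover

noncomputable def conflictDegreeBound (n r : ℕ) (β δ : ℝ) : ℝ :=
  ⌈(n : ℝ) ^ β⌉₊ *
    ((n - 1).choose (r - 1) * (n : ℝ) ^ δ / (⌈(n : ℝ) ^ β⌉₊ - 1).choose (r - 1))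

namespace IsPacking

variable {n r k : ℕ} {β δ : ℝ} {L : Finset (Subgraph n)}

lemma card_filter_mem_le (hL : IsPacking n r k β δ L) (hr : 2 ≤ r)
    (hq : r ≤ ⌈(n : ℝ) ^ β⌉₊) (v : Fin n) :
    (#{B ∈ L | v ∈ B.1} : ℝ) ≤
      (n - 1).choose (r - 1) * (n : ℝ) ^ δ / (⌈(n : ℝ) ^ β⌉₊ - 1).choose (r - 1) := by
  obtain ⟨hvert, hdisj, hdeg, -⟩ := hL
  have hn : (0 : ℝ) < n := by exact_mod_cast v.pos
  have hc : (0 : ℝ) < (⌈(n : ℝ) ^ β⌉₊ - 1).choose (r - 1) := by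
    exact_mod_cast Nat.choose_pos (by omega)
  have hmul := card_filter_mem_mul_le (fun B hB => fun e he => ((hvert B hB).2 e he).2) hdisj v
    fun B hB hv => by simpa using hdeg B hB {v} (by simpa) (by simp) (by simp; omega)
  rw [le_div_iff₀ hc]
  calc (#{B ∈ L | v ∈ B.1} : ℝ) * (⌈(n : ℝ) ^ β⌉₊ - 1).choose (r - 1)
      = #{B ∈ L | v ∈ B.1} * ((n : ℝ) ^ (-δ) * (⌈(n : ℝ) ^ β⌉₊ - 1).choose (r - 1)) *
          (n : ℝ) ^ δ := by
        rw [Real.rpow_neg hn.le]; field_simp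
    _ ≤ _ := mul_le_mul_of_nonneg_right hmul (by positivity)

lemma card_filter_overlapGraph_adj_le (hL : IsPacking n r k β δ L) (hr : 2 ≤ r)
    (hq : r ≤ ⌈(n : ℝ) ^ β⌉₊) {B : Subgraph n} (hB : B ∈ L) :
    (#{B' ∈ L | (overlapGraph Prod.fst).Adj B B'} : ℝ) ≤ conflictDegreeBound n r β δ :=
  calc (#{B' ∈ L | (overlapGraph Prod.fst).Adj B B'} : ℝ)
      ≤ ∑ v ∈ B.1, (#{B' ∈ L | v ∈ B'.1} : ℝ) := by
        exact_mod_cast _root_.card_filter_overlapGraph_adj_le Prod.fst L B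
    _ ≤ ∑ v ∈ B.1, (n - 1).choose (r - 1) * (n : ℝ) ^ δ /
          (⌈(n : ℝ) ^ β⌉₊ - 1).choose (r - 1) :=
        sum_le_sum fun v _ => hL.card_filter_mem_le hr hq v
    _ = conflictDegreeBound n r β δ := by
        rw [sum_const, (hL.1 B hB).1, nsmul_eq_mul, conflictDegreeBound]

end IsPacking

open scoped Nat

lemma pow_div_factorial_le_choose_pred {j q : ℕ} {x : ℝ} (hj : 2 * j ≤ x) (hxq : x ≤ q) :
    (x / 2) ^ j / j ! ≤ (q - 1).choose j := by
  have hjq : j ≤ q := by exact_mod_cast (by linarith : (j : ℝ) ≤ q)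
  refine le_trans ?_ (Nat.pow_le_choose j (q - 1))
  gcongr
  · linarith [(Nat.cast_nonneg j : (0 : ℝ) ≤ j)]
  calc x / 2 ≤ q - j := by linarith
    _ = ((q - j : ℕ) : ℝ) := by push_cast [Nat.cast_sub hjq]; ring
    _ ≤ ((q - 1 + 1 - j : ℕ) : ℝ) := by gcongr; omega

lemma conflictDegreeBound_le {n r : ℕ} {β δ : ℝ} (hr : 1 ≤ r) (hn : 1 ≤ n)
    (hq : 2 * r ≤ (n : ℝ) ^ β) :
    conflictDegreeBound n r β δ ≤
      2 ^ r * (r - 1)! * (n : ℝ) ^ ((r : ℝ) - r * β - (1 - 2 * β - δ)) := by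
  have hn' : (0 : ℝ) < n := by exact_mod_cast hn
  set x := (n : ℝ) ^ β with hxdef
  have hx : (2 : ℝ) ≤ x := le_trans (by norm_cast; omega) hq
  have hqx : (⌈x⌉₊ : ℝ) ≤ 2 * x := by
    linarith [Nat.ceil_lt_add_one (by linarith : 0 ≤ x)]
  have hc : (x / 2) ^ (r - 1) / (r - 1)! ≤ (⌈x⌉₊ - 1).choose (r - 1) :=
    pow_div_factorial_le_choose_pred (le_trans (by push_cast [Nat.cast_sub hr]; linarith) hq)
      (Nat.le_ceil x)
  have hA : ((n - 1).choose (r - 1) : ℝ) ≤ (n : ℝ) ^ (r - 1) := by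
    exact_mod_cast (Nat.choose_le_pow _ _).trans (Nat.pow_le_pow_left (Nat.sub_le _ _) _)
  calc conflictDegreeBound n r β δ
      ≤ 2 * x * ((n : ℝ) ^ (r - 1) * (n : ℝ) ^ δ / ((x / 2) ^ (r - 1) / (r - 1)!)) := by
        unfold conflictDegreeBound; gcongr
    _ = 2 ^ r * (r - 1)! * (x * (n : ℝ) ^ (r - 1) * (n : ℝ) ^ δ / x ^ (r - 1)) := by
        rw [show (2 : ℝ) ^ r = 2 * 2 ^ (r - 1) by rw [← pow_succ']; congr; omega, div_pow]
        field_simp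
    _ = _ := by
        rw [hxdef, ← Real.rpow_natCast (n : ℝ), ← Real.rpow_natCast ((n : ℝ) ^ β),
          ← Real.rpow_mul hn'.le,
          ← Real.rpow_add hn', ← Real.rpow_add hn', ← Real.rpow_sub hn']
        congr 2
        push_cast [Nat.cast_sub hr]
        ring

open Filter in
lemma eventually_conflictDegreeBound_lt {β δ : ℝ} (hδ : 0 < δ) (hβ : 0 < β)
    (hβδ : β ≤ 1 / 2 - δ) (k r : ℕ) (hr : 1 ≤ r) :
    ∀ᶠ n : ℕ in atTop, r ≤ ⌈(n : ℝ) ^ β⌉₊ ∧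
      k * (k * conflictDegreeBound n r β δ + 1) < (n : ℝ) ^ ((r : ℝ) - r * β) := by
  set γ := 1 - 2 * β - δ
  set C : ℝ := 2 ^ r * (r - 1)!
  have hpow {e : ℝ} (he : 0 < e) : Tendsto (fun n : ℕ => (n : ℝ) ^ e) atTop atTop :=
    (tendsto_rpow_atTop he).comp tendsto_natCast_atTop_atTop
  filter_upwards [(hpow hβ).eventually_ge_atTop (2 * r),
    (hpow (by linarith : 0 < γ)).eventually_gt_atTop (k * (k * C + 1)),
    eventually_ge_atTop 1] with n hq hγ hn
  have hn' : (1 : ℝ) ≤ n := by exact_mod_cast hn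
  set E := (r : ℝ) - r * β - γ
  have hE : 1 ≤ (n : ℝ) ^ E := by
    have : 0 ≤ ((r : ℝ) - 1) * (1 - β) :=
      mul_nonneg (sub_nonneg.2 (by exact_mod_cast hr)) (by linarith)
    exact Real.one_le_rpow hn' (by linarith)
  have hrq : (r : ℝ) ≤ ⌈(n : ℝ) ^ β⌉₊ := by linarith [Nat.le_ceil ((n : ℝ) ^ β)]
  refine ⟨by exact_mod_cast hrq, ?_⟩
  calc k * (k * conflictDegreeBound n r β δ + 1)
      ≤ k * (k * (C * (n : ℝ) ^ E) + (n : ℝ) ^ E) := by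
        gcongr; exact conflictDegreeBound_le hr hn hq
    _ = k * (k * C + 1) * (n : ℝ) ^ E := by ring
    _ < (n : ℝ) ^ γ * (n : ℝ) ^ E := by gcongr
    _ = (n : ℝ) ^ ((r : ℝ) - r * β) := by
        rw [← Real.rpow_add (by linarith), add_sub_cancel]

theorem packing_partition_general (β δ : ℝ) (hδ : 0 < δ) (hδβ : δ < β)
    (hβδ : β ≤ 1 / 2 - δ) (k r : ℕ) (hk : 1 ≤ k) (hr : 3 ≤ r) :
    ∃ N : ℕ, ∀ n : ℕ, N ≤ n → ∀ L : Finset (Subgraph n), IsPacking n r k β δ L →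
      ∃ P : Finset (Finset (Subgraph n)),
        P.card = L.card / k ∧
        (∀ Q ∈ P, Q.card = k) ∧
        (∀ Q ∈ P, ∀ B ∈ Q, B ∈ L) ∧
        (∀ Q ∈ P, ∀ Q' ∈ P, Q ≠ Q' → Disjoint Q Q') ∧
        (∀ B ∈ L, ∃ Q ∈ P, B ∈ Q) ∧
        (∀ Q ∈ P, ∀ B ∈ Q, ∀ B' ∈ Q, B ≠ B' → Disjoint B.1 B'.1) := by
  obtain ⟨N, hN⟩ := Filter.eventually_atTop.1
    (eventually_conflictDegreeBound_lt hδ (hδ.trans hδβ) hβδ k r (by omega))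
  refine ⟨N, fun n hn L hL => ?_⟩
  obtain ⟨hq, hlt⟩ := hN n hn
  set D := ⌊conflictDegreeBound n r β δ⌋₊
  have hdeg (B : Subgraph n) (hB : B ∈ L) :
      #{B' ∈ L | (overlapGraph Prod.fst).Adj B B'} ≤ D :=
    Nat.le_floor (hL.card_filter_overlapGraph_adj_le (by omega) hq hB)
  obtain ⟨-, -, -, -, ⟨hL_lower, hdvd⟩, -⟩ := hL
  have hL_card : k * (k * D + 1) < #L := by
    have hD : (D : ℝ) ≤ conflictDegreeBound n r β δ :=
      Nat.floor_le (by unfold conflictDegreeBound; positivity)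
    have : (k * (k * D + 1) : ℝ) < #L := by
      calc (k * (k * D + 1) : ℝ) ≤ k * (k * conflictDegreeBound n r β δ + 1) := by gcongr
        _ < _ := hlt.trans_le hL_lower
    exact_mod_cast this
  obtain ⟨P, hP⟩ :=
    (overlapGraph Prod.fst).exists_finpartition_card_eq_isIndepSet L k D hdeg hdvd hL_card
  refine ⟨P.parts, ?_, fun t ht => (hP t ht).1, fun t ht B hB => P.subset ht hB,
    fun t ht t' ht' h => P.disjoint ht ht' h, fun B hB => P.exists_mem hB,
    fun t ht B hB B' hB' h => not_not.1 (not_and.1 ((hP t ht).2 hB hB' h) h)⟩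
  rw [← P.card_parts_mul_eq fun t ht => (hP t ht).1, Nat.mul_div_cancel _ hk]

/-- If `L` is an `(n, r, k, β, δ)`-packing of `K_n^r` with `β ≤ 1/2 - δ`, then for all
sufficiently large `n`, `L` can be partitioned into `|L|/k` parts of size `k` such that
any two `r`-graphs in the same part are vertex-disjoint. -/
theorem packing_partition (β δ : ℝ) (hδ : 0 < δ) (hδβ : δ < β) (hβ : β < 1)
    (hβδ : β ≤ 1 / 2 - δ) (k r : ℕ) (hk : 1 ≤ k) (hr : 3 ≤ r) :
    ∃ N : ℕ, ∀ n : ℕ, N ≤ n → ∀ L : Finset (Subgraph n), IsPacking n r k β δ L →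
      ∃ P : Finset (Finset (Subgraph n)),
        P.card = L.card / k ∧
        (∀ Q ∈ P, Q.card = k) ∧
        (∀ Q ∈ P, ∀ B ∈ Q, B ∈ L) ∧
        (∀ Q ∈ P, ∀ Q' ∈ P, Q ≠ Q' → Disjoint Q Q') ∧
        (∀ B ∈ L, ∃ Q ∈ P, B ∈ Q) ∧
        (∀ Q ∈ P, ∀ B ∈ Q, ∀ B' ∈ Q, B ≠ B' → Disjoint B.1 B'.1) :=
  packing_partition_general β δ hδ hδβ hβδ k r hk hr
end
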